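/- arXiv:2102.10539 — 2 statements merged into one kernel-verified Lean document; each statement's English description precedes it below -/
import Mathlib

section
/- Let a, b, c be natural numbers with 3a + 2b + c = 3k and (a, b, c) ≠ (k, 0, 0). Then 4^a · 3^b · 2^c ≥ 6 · 4^(k−1). -/
lemma key_rumor : ∀ d b c : ℕ, 1 ≤ d → 2*b + c = 3*d → 6*4^(d-1) ≤ 3^b * 2^c := by
  intro d
  induction d using Nat.strong_induction_on with
  | _ d ih =>
    intro b c hd h
    rcases Nat.lt_or_ge c 3 with hc | hc
    · rcases Nat.eq_zero_or_pos b with hb | hb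
      · omega
      · rcases Nat.eq_zero_or_pos c with hc0 | hc1
        · -- c = 0, 2b = 3d, d even ≥ 2
          subst hc0
          rcases Nat.lt_or_ge d 3 with hd3 | hd3
          · -- d = 2, b = 3
            have : d = 2 ∧ b = 3 := by omega
            obtain ⟨rfl, rfl⟩ := this
            norm_num
          · obtain ⟨d', rfl⟩ : ∃ d', d = d' + 3 := ⟨d - 3, by omega⟩
            obtain ⟨b', rfl⟩ : ∃ b', b = b' + 3 := ⟨b - 3, by omega⟩
            have hih := ih (d' + 1) (by omega) b' 0 (by omega) (by omega)
            simp only [Nat.add_sub_cancel] at hih ⊢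
            calc 6 * 4 ^ (d' + 2) = (6 * 4 ^ d') * 16 := by ring
              _ ≤ (3 ^ b' * 2 ^ 0) * 27 := by
                  exact Nat.mul_le_mul hih (by norm_num)
              _ ≤ 3 ^ (b' + 3) * 2 ^ 0 := by ring_nf; omega
        · -- b ≥ 1, c ≥ 1
          rcases Nat.lt_or_ge d 2 with hd2 | hd2
          · have : d = 1 ∧ b = 1 ∧ c = 1 := by omega
            obtain ⟨rfl, rfl, rfl⟩ := this
            norm_num
          · obtain ⟨d', rfl⟩ : ∃ d', d = d' + 2 := ⟨d - 2, by omega⟩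
            obtain ⟨b', rfl⟩ : ∃ b', b = b' + 1 := ⟨b - 1, by omega⟩
            obtain ⟨c', rfl⟩ : ∃ c', c = c' + 1 := ⟨c - 1, by omega⟩
            have hih := ih (d' + 1) (by omega) b' c' (by omega) (by omega)
            simp only [Nat.add_sub_cancel] at hih ⊢
            calc 6 * 4 ^ (d' + 1) = (6 * 4 ^ d') * 4 := by ring
              _ ≤ (3 ^ b' * 2 ^ c') * 6 := Nat.mul_le_mul hih (by norm_num)
              _ = 3 ^ (b' + 1) * 2 ^ (c' + 1) := by ring
    · -- c ≥ 3
      rcases Nat.lt_or_ge d 2 with hd2 | hd2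
      · have : d = 1 ∧ b = 0 ∧ c = 3 := by omega
        obtain ⟨rfl, rfl, rfl⟩ := this
        norm_num
      · obtain ⟨d', rfl⟩ : ∃ d', d = d' + 2 := ⟨d - 2, by omega⟩
        obtain ⟨c', rfl⟩ : ∃ c', c = c' + 3 := ⟨c - 3, by omega⟩
        have hih := ih (d' + 1) (by omega) b c' (by omega) (by omega)
        simp only [Nat.add_sub_cancel] at hih ⊢
        calc 6 * 4 ^ (d' + 1) = (6 * 4 ^ d') * 4 := by ring
          _ ≤ (3 ^ b * 2 ^ c') * 8 := Nat.mul_le_mul hih (by norm_num)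
          _ = 3 ^ b * 2 ^ (c' + 3) := by ring

theorem stmt_6 (a b c k : ℕ) (hk : 1 ≤ k) (h : 3 * a + 2 * b + c = 3 * k)
    (hne : ¬(a = k ∧ b = 0 ∧ c = 0)) :
    6 * 4 ^ (k - 1) ≤ 4 ^ a * 3 ^ b * 2 ^ c := by
  have ha : a ≤ k := by omega
  have hd1 : 1 ≤ k - a := by omega
  obtain ⟨d, rfl⟩ : ∃ d, k = a + d := ⟨k - a, by omega⟩
  have hd : 1 ≤ d := by omega
  have hbc : 2*b + c = 3*d := by omega
  have hkey := key_rumor d b c hd hbc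
  have hexp : a + d - 1 = (d - 1) + a := by omega
  calc 6 * 4 ^ (a + d - 1) = (6 * 4 ^ (d - 1)) * 4 ^ a := by rw [hexp, pow_add]; ring
    _ ≤ (3 ^ b * 2 ^ c) * 4 ^ a := Nat.mul_le_mul_right _ hkey
    _ = 4 ^ a * 3 ^ b * 2 ^ c := by ring
end

section
/- If a finite simple graph H on n vertices contains a set A of exactly k(k−1)/2 edges such that at least k vertices are each incident to at least k−1 edges of A, then the vertices incident to edges of A form a k-clique in the graph (V', A); that is, A is exactly the edge set of a complete graph on k vertices. -/
/-- If a simple graph `A` on a finite vertex set has exactly `k(k−1)/2` edges and at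
least `k` vertices of degree at least `k−1`, then `A` is exactly a complete graph on
some set of `k` vertices. -/
theorem stmt_14 {V : Type*} [Fintype V] [DecidableEq V]
    (A : SimpleGraph V) [DecidableRel A.Adj] (k : ℕ) (hk : 1 ≤ k)
    (hedges : A.edgeFinset.card = k * (k - 1) / 2)
    (hdegs : k ≤ (Finset.univ.filter (fun v => k - 1 ≤ A.degree v)).card) :
    ∃ s : Finset V, s.card = k ∧
      ∀ v w : V, A.Adj v w ↔ (v ∈ s ∧ w ∈ s ∧ v ≠ w) := by
  obtain ⟨s, hs_sub, hs_card⟩ :=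
    Finset.exists_subset_card_eq (s := Finset.univ.filter (fun v => k - 1 ≤ A.degree v)) hdegs
  have hdeg_s : ∀ v ∈ s, k - 1 ≤ A.degree v := by
    intro v hv
    have := hs_sub hv
    simpa using this
  -- total degree sum
  have heven : Even (k * (k - 1)) := by
    have : Even ((k - 1) * (k - 1 + 1)) := Nat.even_mul_succ_self (k - 1)
    have hk1 : k - 1 + 1 = k := Nat.succ_pred_eq_of_pos hk
    rw [hk1] at this
    rwa [mul_comm]
  have hsum : ∑ v, A.degree v = k * (k - 1) := by
    rw [A.sum_degrees_eq_twice_card_edges, hedges, Nat.mul_div_cancel' heven.two_dvd]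
  have hsplit : ∑ v ∈ s, A.degree v + ∑ v ∈ sᶜ, A.degree v = k * (k - 1) := by
    rw [Finset.sum_add_sum_compl]; exact hsum
  have hlow : k * (k - 1) ≤ ∑ v ∈ s, A.degree v := by
    calc k * (k - 1) = ∑ _v ∈ s, (k - 1) := by rw [Finset.sum_const, hs_card, smul_eq_mul]
    _ ≤ ∑ v ∈ s, A.degree v := Finset.sum_le_sum hdeg_s
  have hsum_s : ∑ v ∈ s, A.degree v = k * (k - 1) := le_antisymm (by omega) hlow
  have hout : ∀ v ∉ s, A.degree v = 0 := by
    intro v hv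
    have h0 : ∑ v ∈ sᶜ, A.degree v = 0 := by omega
    exact Finset.sum_eq_zero_iff.mp h0 v (by simpa using hv)
  have hdeg_eq : ∀ v ∈ s, A.degree v = k - 1 := by
    intro v hv
    by_contra h
    have hlt : k - 1 < A.degree v := lt_of_le_of_ne (hdeg_s v hv) (Ne.symm h)
    have : ∑ w ∈ s, (k - 1) < ∑ w ∈ s, A.degree w :=
      Finset.sum_lt_sum hdeg_s ⟨v, hv, hlt⟩
    rw [Finset.sum_const, hs_card, smul_eq_mul, hsum_s] at this
    omega
  have hmem_of_adj : ∀ {v w : V}, A.Adj v w → v ∈ s := by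
    intro v w hvw
    by_contra hv
    have := hout v hv
    rw [SimpleGraph.degree] at this
    have : w ∈ A.neighborFinset v := by simpa using hvw
    rw [Finset.card_eq_zero] at *
    simp_all
  have hnb : ∀ v ∈ s, A.neighborFinset v = s.erase v := by
    intro v hv
    apply Finset.eq_of_subset_of_card_le
    · intro w hw
      have hadj : A.Adj v w := by simpa using hw
      exact Finset.mem_erase.mpr ⟨hadj.ne', hmem_of_adj hadj.symm⟩
    · rw [Finset.card_erase_of_mem hv, hs_card]
      have := hdeg_eq v hv
      rw [SimpleGraph.degree] at this
      omega
  refine ⟨s, hs_card, fun v w => ?_⟩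
  constructor
  · intro h
    exact ⟨hmem_of_adj h, hmem_of_adj h.symm, h.ne⟩
  · rintro ⟨hv, hw, hne⟩
    have : w ∈ A.neighborFinset v := by
      rw [hnb v hv]; exact Finset.mem_erase.mpr ⟨hne.symm, hw⟩
    simpa using this
end
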